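/- arXiv:q-alg/9412005 — 2 statements merged into one kernel-verified Lean document; each statement's English description precedes it below -/
import Mathlib

section
/- For every connection ω on P, the curvature R_ω=dω−⟨ω,ω⟩ satisfies F̂R_ω(θ)=(R_ω⊗id)ϖ(θ) for every θ∈Γ_inv. In particular R_ω takes values in hor^2(P) and is a tensorial 2-form. -/
open TensorProduct

noncomputable section

structure GrStarAlg (Ω : Type) [Ring Ω] [Algebra ℂ Ω] where
  gr : ℕ → Submodule ℂ Ω
  direct : DirectSum.IsInternal gr
  proj : ℕ → Ω →ₗ[ℂ] Ω
  proj_mem : ∀ (n : ℕ) (x : Ω), proj n x ∈ gr n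
  proj_of_mem : ∀ {n : ℕ} {x : Ω}, x ∈ gr n → proj n x = x
  proj_of_ne : ∀ {m n : ℕ} {x : Ω}, x ∈ gr n → m ≠ n → proj m x = 0
  one_mem : (1 : Ω) ∈ gr 0
  mul_mem : ∀ {m n : ℕ} {x y : Ω}, x ∈ gr m → y ∈ gr n → x * y ∈ gr (m + n)
  conj : Ω → Ω
  conj_conj : ∀ x, conj (conj x) = x
  conj_add : ∀ x y, conj (x + y) = conj x + conj y
  conj_smul : ∀ (c : ℂ) (x : Ω), conj (c • x) = (starRingEnd ℂ) c • conj x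
  conj_one : conj 1 = 1
  conj_mul : ∀ {m n : ℕ} {x y : Ω}, x ∈ gr m → y ∈ gr n →
    conj (x * y) = ((-1 : ℂ) ^ (m * n)) • (conj y * conj x)
  conj_mem : ∀ {n : ℕ} {x : Ω}, x ∈ gr n → conj x ∈ gr n

structure GDSA (Ω : Type) [Ring Ω] [Algebra ℂ Ω] extends GrStarAlg Ω where
  d : Ω →ₗ[ℂ] Ω
  d_mem : ∀ {n : ℕ} {x : Ω}, x ∈ gr n → d x ∈ gr (n + 1)
  d_sq : ∀ x : Ω, d (d x) = 0
  leibniz : ∀ {n : ℕ} {x : Ω}, x ∈ gr n → ∀ y : Ω,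
    d (x * y) = d x * y + ((-1 : ℂ) ^ n) • (x * d y)
  d_conj : ∀ x, d (conj x) = conj (d x)

variable (A : Type) [Ring A] [HopfAlgebra ℂ A]

def adA : A →ₗ[ℂ] A ⊗[ℂ] A :=
  (map LinearMap.id (LinearMap.mul' ℂ A)) ∘ₗ
    (TensorProduct.assoc ℂ A A A).toLinearMap ∘ₗ
    (map ((TensorProduct.comm ℂ A A).toLinearMap ∘ₗ
      (map (HopfAlgebra.antipode (R := ℂ)) LinearMap.id)) LinearMap.id) ∘ₗ
    (TensorProduct.assoc ℂ A A A).symm.toLinearMap ∘ₗ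
    (map LinearMap.id (Coalgebra.comul (R := ℂ))) ∘ₗ (Coalgebra.comul (R := ℂ))

/-- Differential calculus `Γ^∧` on the structure quantum group `G`, together with
its distinguished left-invariant part, the canonical map `π`, the right
`A`-module structure `∘`, the adjoint (right) coaction, and the extension `φ̂`
of the comultiplication. -/
structure GroupCalc (A : Type) [Ring A] [HopfAlgebra ℂ A] [StarRing A]
    (Gw : Type) [Ring Gw] [Algebra ℂ Gw] where
  S : GDSA Gw
  ι : A →ₐ[ℂ] Gw
  ι_inj : Function.Injective ι
  ι_mem : ∀ a, ι a ∈ S.gr 0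
  gr0_eq : ∀ x ∈ S.gr 0, ∃ a, ι a = x
  ι_conj : ∀ a, S.conj (ι a) = ι (star a)
  ιinv : Gw →ₗ[ℂ] A
  ιinv_ι : ∀ a, ιinv (ι a) = a
  ι_ιinv : ∀ x, ι (ιinv x) = S.proj 0 x
  generated : ∀ W : Submodule ℂ Gw, (∀ a, ι a ∈ W) →
    (∀ x y, x ∈ W → y ∈ W → x * y ∈ W) → (∀ x ∈ W, S.d x ∈ W) → ∀ x, x ∈ W
  Inv : ℕ → Submodule ℂ Gw
  Inv_le : ∀ n, Inv n ≤ S.gr n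
  Inv_one : (1 : Gw) ∈ Inv 0
  Inv_zero : ∀ x ∈ Inv 0, ∃ c : ℂ, x = c • (1 : Gw)
  Inv_mul : ∀ {m n : ℕ} {x y : Gw}, x ∈ Inv m → y ∈ Inv n → x * y ∈ Inv (m + n)
  Inv_d : ∀ {n : ℕ} {x : Gw}, x ∈ Inv n → S.d x ∈ Inv (n + 1)
  Inv_conj : ∀ {n : ℕ} {x : Gw}, x ∈ Inv n → S.conj x ∈ Inv n
  InvT : Submodule ℂ Gw
  Inv_le_InvT : ∀ n, Inv n ≤ InvT
  InvT_eq : InvT = ⨆ n, Inv n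
  π : A →ₗ[ℂ] Gw
  π_eq : π = (LinearMap.mul' ℂ Gw) ∘ₗ
      (map (ι.toLinearMap ∘ₗ HopfAlgebra.antipode (R := ℂ)) (S.d ∘ₗ ι.toLinearMap)) ∘ₗ
        (Coalgebra.comul (R := ℂ))
  π_mem : ∀ a, π a ∈ Inv 1
  π_surj : ∀ x ∈ Inv 1, ∃ a, π a = x
  π_conj : ∀ a, S.conj (π a) = - π (star (HopfAlgebra.antipode (R := ℂ) a))
  Rid : Submodule ℂ A
  Rid_counit : ∀ a ∈ Rid, Coalgebra.counit (R := ℂ) a = (0 : ℂ)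
  Rid_mul : ∀ a ∈ Rid, ∀ b : A, a * b ∈ Rid
  π_ker : ∀ a : A, π a = 0 ↔ a ∈ (Submodule.span ℂ {(1 : A)} ⊔ Rid)
  circ : Gw →ₗ[ℂ] A →ₗ[ℂ] Gw
  circ_eq : ∀ (θ : Gw) (a : A), circ θ a =
    (LinearMap.mul' ℂ Gw) ((map (ι.toLinearMap ∘ₗ HopfAlgebra.antipode (R := ℂ))
      ((LinearMap.mulLeft ℂ θ) ∘ₗ ι.toLinearMap)) (Coalgebra.comul (R := ℂ) a))
  circ_Inv : ∀ {n : ℕ} {θ : Gw}, θ ∈ Inv n → ∀ a, circ θ a ∈ Inv n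
  adj : Gw →ₗ[ℂ] Gw ⊗[ℂ] A
  adj_ι : ∀ a, adj (ι a) = (map ι.toLinearMap LinearMap.id) (Coalgebra.comul (R := ℂ) a)
  adj_mul : ∀ x y, adj (x * y) = adj x * adj y
  adj_d : ∀ x, adj (S.d x) = (map S.d LinearMap.id) (adj x)
  adj_counit : ∀ x, (TensorProduct.rid ℂ Gw)
    ((map LinearMap.id (Coalgebra.counit (R := ℂ))) (adj x)) = x
  adj_π : ∀ a, adj (π a) = (map π LinearMap.id) (adA A a)
  adj_Inv : ∀ {n : ℕ} {θ : Gw}, θ ∈ Inv n →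
    adj θ ∈ LinearMap.range (map (Inv n).subtype (LinearMap.id (M := A)))
  pInv : Gw →ₗ[ℂ] Gw
  pInv_mem : ∀ {n : ℕ} {x : Gw}, x ∈ S.gr n → pInv x ∈ Inv n
  pInv_id : ∀ x ∈ InvT, pInv x = x
  pInv_mod : ∀ (a : A) (x : Gw), pInv (ι a * x) = (Coalgebra.counit (R := ℂ) a) • pInv x
  πInv : A →ₗ[ℂ] ↥(Inv 1)
  πInv_spec : ∀ a, ((πInv a : Gw)) = π a
  circInv : ↥(Inv 1) →ₗ[ℂ] A →ₗ[ℂ] ↥(Inv 1)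
  circInv_spec : ∀ (θ : ↥(Inv 1)) (a : A), ((circInv θ a : Gw)) = circ (θ : Gw) a
  adjInv : ↥(Inv 1) →ₗ[ℂ] ↥(Inv 1) ⊗[ℂ] A
  adjInv_spec : ∀ θ, (map (Inv 1).subtype LinearMap.id) (adjInv θ) = adj (θ : Gw)
  conjInv : ↥(Inv 1) → ↥(Inv 1)
  conjInv_spec : ∀ θ, ((conjInv θ : Gw)) = S.conj (θ : Gw)
  conjI2 : ↥(Inv 1) ⊗[ℂ] ↥(Inv 1) → ↥(Inv 1) ⊗[ℂ] ↥(Inv 1)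
  conjI2_add : ∀ x y, conjI2 (x + y) = conjI2 x + conjI2 y
  conjI2_spec : ∀ x y : ↥(Inv 1), conjI2 (x ⊗ₜ y) = conjInv y ⊗ₜ conjInv x
  tmulG : (Gw ⊗[ℂ] Gw) →ₗ[ℂ] (Gw ⊗[ℂ] Gw) →ₗ[ℂ] (Gw ⊗[ℂ] Gw)
  tmulG_spec : ∀ {m n : ℕ} (w u θ η : Gw), θ ∈ S.gr m → u ∈ S.gr n →
    tmulG (w ⊗ₜ θ) (u ⊗ₜ η) = ((-1 : ℂ) ^ (m * n)) • ((w * u) ⊗ₜ (θ * η))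
  tdG : Gw ⊗[ℂ] Gw →ₗ[ℂ] Gw ⊗[ℂ] Gw
  tdG_spec : ∀ {n : ℕ} (w θ : Gw), w ∈ S.gr n →
    tdG (w ⊗ₜ θ) = S.d w ⊗ₜ θ + ((-1 : ℂ) ^ n) • (w ⊗ₜ S.d θ)
  hatφ : Gw →ₗ[ℂ] Gw ⊗[ℂ] Gw
  hatφ_ι : ∀ a, hatφ (ι a) = (map ι.toLinearMap ι.toLinearMap) (Coalgebra.comul (R := ℂ) a)
  hatφ_mul : ∀ x y, hatφ (x * y) = tmulG (hatφ x) (hatφ y)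
  hatφ_d : ∀ x, hatφ (S.d x) = tdG (hatφ x)

/-- A quantum principal `G`-bundle `P = (B, i, F)` over the quantum space `M`
represented by the *-algebra `V`. -/
structure QPB (A : Type) [Ring A] [HopfAlgebra ℂ A] [StarRing A]
    (V B : Type) [Ring V] [Algebra ℂ V] [StarRing V] [Ring B] [Algebra ℂ B] [StarRing B] where
  i : V →ₐ[ℂ] B
  i_star : ∀ v, i (star v) = star (i v)
  i_inj : Function.Injective i
  F : B →ₐ[ℂ] B ⊗[ℂ] A
  F_star : ∀ (b : B) (s : Finset ℕ) (bk : ℕ → B) (ck : ℕ → A),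
    F b = ∑ k ∈ s, bk k ⊗ₜ ck k → F (star b) = ∑ k ∈ s, star (bk k) ⊗ₜ star (ck k)
  coassoc_F : ∀ b, (TensorProduct.assoc ℂ B A A)
    ((map F.toLinearMap LinearMap.id) (F b)) = (map LinearMap.id (Coalgebra.comul (R := ℂ))) (F b)
  free : Function.Surjective ((LinearMap.mul' ℂ (B ⊗[ℂ] A)) ∘ₗ
    (map (Algebra.TensorProduct.includeLeft : B →ₐ[ℂ] B ⊗[ℂ] A).toLinearMap F.toLinearMap))

/-- A differential calculus `Ω(P)` on a quantum principal bundle: a graded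
differential *-algebra with `Ω⁰(P) = B`, generated by `B` (property *diff1*),
such that `F` extends to a homomorphism `F̂ : Ω(P) → Ω(P) ⊗̂ Γ^∧` of
graded-differential algebras (property *diff2*). -/
structure Calc (A : Type) [Ring A] [HopfAlgebra ℂ A] [StarRing A]
    (Gw : Type) [Ring Gw] [Algebra ℂ Gw]
    (V B : Type) [Ring V] [Algebra ℂ V] [StarRing V] [Ring B] [Algebra ℂ B] [StarRing B]
    (Ω : Type) [Ring Ω] [Algebra ℂ Ω]
    (C : GroupCalc A Gw) (P : QPB A V B) where
  S : GDSA Ω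
  ιB : B →ₐ[ℂ] Ω
  ιB_inj : Function.Injective ιB
  ιB_mem : ∀ b, ιB b ∈ S.gr 0
  gr0_eq : ∀ x ∈ S.gr 0, ∃ b, ιB b = x
  ιB_conj : ∀ b, S.conj (ιB b) = ιB (star b)
  generated : ∀ W : Submodule ℂ Ω, (∀ b, ιB b ∈ W) →
    (∀ x y, x ∈ W → y ∈ W → x * y ∈ W) → (∀ x ∈ W, S.d x ∈ W) → ∀ x, x ∈ W
  tmul : (Ω ⊗[ℂ] Gw) →ₗ[ℂ] (Ω ⊗[ℂ] Gw) →ₗ[ℂ] (Ω ⊗[ℂ] Gw)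
  tmul_spec : ∀ {m n : ℕ} (w u : Ω) (θ η : Gw), θ ∈ C.S.gr m → u ∈ S.gr n →
    tmul (w ⊗ₜ θ) (u ⊗ₜ η) = ((-1 : ℂ) ^ (m * n)) • ((w * u) ⊗ₜ (θ * η))
  td : (Ω ⊗[ℂ] Gw) →ₗ[ℂ] (Ω ⊗[ℂ] Gw)
  td_spec : ∀ {n : ℕ} (w : Ω) (θ : Gw), w ∈ S.gr n →
    td (w ⊗ₜ θ) = S.d w ⊗ₜ θ + ((-1 : ℂ) ^ n) • (w ⊗ₜ C.S.d θ)
  tconj : (Ω ⊗[ℂ] Gw) → (Ω ⊗[ℂ] Gw)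
  tconj_add : ∀ x y, tconj (x + y) = tconj x + tconj y
  tconj_spec : ∀ (w : Ω) (θ : Gw), tconj (w ⊗ₜ θ) = S.conj w ⊗ₜ C.S.conj θ
  Fh : Ω →ₗ[ℂ] Ω ⊗[ℂ] Gw
  Fh_one : Fh 1 = (1 : Ω) ⊗ₜ (1 : Gw)
  Fh_mul : ∀ x y, Fh (x * y) = tmul (Fh x) (Fh y)
  Fh_d : ∀ x, Fh (S.d x) = td (Fh x)
  Fh_grade : ∀ {n : ℕ} {x : Ω}, x ∈ S.gr n → ∀ i j : ℕ, i + j ≠ n →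
    (map (S.proj i) (C.S.proj j)) (Fh x) = 0
  Fh_extends : ∀ b, Fh (ιB b) = (map ιB.toLinearMap C.ι.toLinearMap) (P.F b)

section Standalone

variable {A : Type} [Ring A] [HopfAlgebra ℂ A] [StarRing A]
variable {Gw : Type} [Ring Gw] [Algebra ℂ Gw]
variable {Ω : Type} [Ring Ω] [Algebra ℂ Ω]
variable (C : GroupCalc A Gw)

/-- Multiplicativity of a connection: `ω π(a⁽¹⁾) ω π(a⁽²⁾) = 0` for all `a ∈ R`. -/
def IsMultiplicative (ω : ↥(C.Inv 1) →ₗ[ℂ] Ω) : Prop :=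
  ∀ a ∈ C.Rid, LinearMap.mul' ℂ Ω
    ((map (ω ∘ₗ C.πInv) (ω ∘ₗ C.πInv)) (Coalgebra.comul (R := ℂ) a)) = 0

/-- The map `r_ω(a) = ω π(a⁽¹⁾) ω π(a⁽²⁾)` measuring the lack of multiplicativity. -/
def rOmega (ω : ↥(C.Inv 1) →ₗ[ℂ] Ω) : A →ₗ[ℂ] Ω :=
  (LinearMap.mul' ℂ Ω) ∘ₗ (map (ω ∘ₗ C.πInv) (ω ∘ₗ C.πInv)) ∘ₗ (Coalgebra.comul (R := ℂ))

end Standalone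

namespace Calc

variable {A : Type} [Ring A] [HopfAlgebra ℂ A] [StarRing A]
variable {Gw : Type} [Ring Gw] [Algebra ℂ Gw]
variable {V B : Type} [Ring V] [Algebra ℂ V] [StarRing V] [Ring B] [Algebra ℂ B] [StarRing B]
variable {Ω : Type} [Ring Ω] [Algebra ℂ Ω]
variable {C : GroupCalc A Gw} {P : QPB A V B}
variable (O : Calc A Gw V B Ω C P)

/-- `F^∧ = (id ⊗ p₀)F̂`, with the degree-zero part identified with `A`. -/
def Fa : Ω →ₗ[ℂ] Ω ⊗[ℂ] A := (map LinearMap.id C.ιinv) ∘ₗ O.Fh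

/-- The graded *-subalgebra `hor(P) = F̂⁻¹(Ω(P) ⊗ A)` of horizontal forms. -/
def horSub : Submodule ℂ Ω :=
  LinearMap.ker (O.Fh - (map LinearMap.id (C.S.proj 0)) ∘ₗ O.Fh)

/-- `Ω(M) = {w : F̂ w = w ⊗ 1}`, differential forms on the base. -/
def OmegaM : Submodule ℂ Ω :=
  LinearMap.ker (O.Fh - (TensorProduct.mk ℂ Ω Gw).flip 1)

/-- The degree `k` part of the verticalization homomorphism `π_v`,
`π_v = (id ⊗ π_inv p_k) F̂` on `Ω^k(P)`. -/
def vertPart (k : ℕ) : Ω →ₗ[ℂ] Ω ⊗[ℂ] Gw :=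
  (map LinearMap.id (C.pInv ∘ₗ C.S.proj k)) ∘ₗ O.Fh

/-- A connection: a hermitian first-order linear map `ω : Γ_inv → Ω¹(P)` with
`F̂ ω(θ) = (ω ⊗ id) ϖ(θ) + 1 ⊗ θ`. -/
def IsConnection (ω : ↥(C.Inv 1) →ₗ[ℂ] Ω) : Prop :=
  (∀ θ, ω θ ∈ O.S.gr 1) ∧
  (∀ θ, ω (C.conjInv θ) = O.S.conj (ω θ)) ∧
  (∀ θ, O.Fh (ω θ) =
    (map LinearMap.id C.ι.toLinearMap) ((map ω LinearMap.id) (C.adjInv θ)) +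
      (1 : Ω) ⊗ₜ ((θ : Gw)))

/-- Regularity: `ω(θ)φ = (-1)^{∂φ} Σ_k φ_k ω(θ ∘ c_k)` for horizontal `φ`. -/
def IsRegular (ω : ↥(C.Inv 1) →ₗ[ℂ] Ω) : Prop :=
  ∀ (n : ℕ) (φ : Ω), φ ∈ O.horSub → φ ∈ O.S.gr n → ∀ θ : ↥(C.Inv 1),
    ω θ * φ = ((-1 : ℂ) ^ n) •
      (LinearMap.mul' ℂ Ω ((map LinearMap.id (ω ∘ₗ C.circInv θ)) (O.Fa φ)))

/-- The covariant derivative on horizontal forms of degree `n`: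
`D_ω(φ) = dφ - (-1)^{∂φ} Σ_k φ_k ω π(c_k)`. -/
def Dcov (ω : ↥(C.Inv 1) →ₗ[ℂ] Ω) (n : ℕ) : Ω →ₗ[ℂ] Ω :=
  O.S.d - ((-1 : ℂ) ^ n) •
    ((LinearMap.mul' ℂ Ω) ∘ₗ (map LinearMap.id (ω ∘ₗ C.πInv)) ∘ₗ O.Fa)

/-- A tensorial `k`-form: a linear map `Γ_inv → hor^k(P)` intertwining `ϖ` and `F^∧`. -/
def IsTensorial (k : ℕ) (f : ↥(C.Inv 1) →ₗ[ℂ] Ω) : Prop :=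
  (∀ θ, f θ ∈ O.horSub ∧ f θ ∈ O.S.gr k) ∧
  (∀ θ, O.Fh (f θ) = (map LinearMap.id C.ι.toLinearMap) ((map f LinearMap.id) (C.adjInv θ)))

/-- The left ideal `T(P)` of `Ω(P)` generated by `r_ω(R)`. -/
def TP (ω : ↥(C.Inv 1) →ₗ[ℂ] Ω) : Submodule ℂ Ω :=
  Submodule.span ℂ {x | ∃ w : Ω, ∃ a ∈ C.Rid, x = w * rOmega C ω a}

end Calc

section EmbDiff

variable {A : Type} [Ring A] [HopfAlgebra ℂ A] [StarRing A]
variable {Gw : Type} [Ring Gw] [Algebra ℂ Gw]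
variable (C : GroupCalc A Gw)

/-- The coaction `ϖ ⊗ ϖ` (with multiplied `A`-legs) on `Γ_inv ⊗ Γ_inv`. -/
def adjInv2 : (↥(C.Inv 1) ⊗[ℂ] ↥(C.Inv 1)) →ₗ[ℂ] (↥(C.Inv 1) ⊗[ℂ] ↥(C.Inv 1)) ⊗[ℂ] A :=
  (map LinearMap.id (LinearMap.mul' ℂ A)) ∘ₗ
    (tensorTensorTensorComm ℂ ↥(C.Inv 1) A ↥(C.Inv 1) A).toLinearMap ∘ₗ
    (map C.adjInv C.adjInv)

/-- An embedded differential `δ : Γ_inv → Γ_inv ⊗ Γ_inv`. -/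
def IsEmbDiff (δ : ↥(C.Inv 1) →ₗ[ℂ] ↥(C.Inv 1) ⊗[ℂ] ↥(C.Inv 1)) : Prop :=
  (∀ θ, adjInv2 C (δ θ) = (map δ LinearMap.id) (C.adjInv θ)) ∧
  (∀ θ, (LinearMap.mul' ℂ Gw) ((map (C.Inv 1).subtype (C.Inv 1).subtype) (δ θ)) =
    C.S.d (θ : Gw)) ∧
  (∀ θ, δ (C.conjInv θ) = - C.conjI2 (δ θ))

/-- The transposed commutator `c^⊤ = (id ⊗ π) ϖ`. -/
def cT : ↥(C.Inv 1) →ₗ[ℂ] ↥(C.Inv 1) ⊗[ℂ] ↥(C.Inv 1) :=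
  (map LinearMap.id C.πInv) ∘ₗ C.adjInv

end EmbDiff

section Brackets

variable {A : Type} [Ring A] [HopfAlgebra ℂ A] [StarRing A]
variable {Gw : Type} [Ring Gw] [Algebra ℂ Gw]
variable {Ω : Type} [Ring Ω] [Algebra ℂ Ω]
variable (C : GroupCalc A Gw)

/-- The bracket `⟨φ, η⟩ = m_Ω (φ ⊗ η) δ`. -/
def bra (δ : ↥(C.Inv 1) →ₗ[ℂ] ↥(C.Inv 1) ⊗[ℂ] ↥(C.Inv 1))
    (f g : ↥(C.Inv 1) →ₗ[ℂ] Ω) : ↥(C.Inv 1) →ₗ[ℂ] Ω :=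
  (LinearMap.mul' ℂ Ω) ∘ₗ (map f g) ∘ₗ δ

/-- The bracket `[φ, η] = m_Ω (φ ⊗ η) c^⊤`. -/
def com (f g : ↥(C.Inv 1) →ₗ[ℂ] Ω) : ↥(C.Inv 1) →ₗ[ℂ] Ω :=
  (LinearMap.mul' ℂ Ω) ∘ₗ (map f g) ∘ₗ cT C

/-- The curvature `R_ω = dω - ⟨ω, ω⟩` of a connection. -/
def Rcurv {V B : Type} [Ring V] [Algebra ℂ V] [StarRing V] [Ring B] [Algebra ℂ B] [StarRing B]
    {C' : GroupCalc A Gw} {P : QPB A V B} (O : Calc A Gw V B Ω C' P)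
    (δ : ↥(C'.Inv 1) →ₗ[ℂ] ↥(C'.Inv 1) ⊗[ℂ] ↥(C'.Inv 1))
    (ω : ↥(C'.Inv 1) →ₗ[ℂ] Ω) : ↥(C'.Inv 1) →ₗ[ℂ] Ω :=
  O.S.d ∘ₗ ω - bra C' δ ω ω

end Brackets


section ConvAux

variable {A' : Type} [Ring A'] [HopfAlgebra ℂ A']
variable {W : Type} [Ring W] [Algebra ℂ W]
variable {W' : Type} [Ring W'] [Algebra ℂ W']

/-- Convolution product on linear maps from a Hopf algebra to an algebra. -/
def conv (f g : A' →ₗ[ℂ] W) : A' →ₗ[ℂ] W :=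
  (LinearMap.mul' ℂ W) ∘ₗ (map f g) ∘ₗ (Coalgebra.comul (R := ℂ))

/-- Convolution unit. -/
def eunit : A' →ₗ[ℂ] W :=
  (Algebra.linearMap ℂ W) ∘ₗ (Coalgebra.counit (R := ℂ))

lemma conv_apply (f g : A' →ₗ[ℂ] W) (a : A') :
    conv f g a = LinearMap.mul' ℂ W (map f g (Coalgebra.comul (R := ℂ) a)) := rfl

lemma conv_comp_algHom (Φ : W →ₐ[ℂ] W') (f g : A' →ₗ[ℂ] W) :
    Φ.toLinearMap ∘ₗ conv f g = conv (Φ.toLinearMap ∘ₗ f) (Φ.toLinearMap ∘ₗ g) := by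
  apply LinearMap.ext; intro a
  have key : ∀ z : A' ⊗[ℂ] A', Φ (LinearMap.mul' ℂ W (map f g z)) =
      LinearMap.mul' ℂ W' (map (Φ.toLinearMap ∘ₗ f) (Φ.toLinearMap ∘ₗ g) z) := by
    intro z
    induction z using TensorProduct.induction_on with
    | zero => simp
    | tmul x y => simp [LinearMap.mul'_apply]
    | add u v hu hv => simp only [map_add, hu, hv]
  simpa [conv] using key (Coalgebra.comul a)

lemma conv_add_right (f g h : A' →ₗ[ℂ] W) : conv f (g + h) = conv f g + conv f h := by
  unfold conv
  rw [TensorProduct.map_add_right, LinearMap.add_comp, LinearMap.comp_add]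

lemma conv_assoc (f g h : A' →ₗ[ℂ] W) : conv (conv f g) h = conv f (conv g h) := by
  apply LinearMap.ext; intro a
  have key1 : ∀ z : A' ⊗[ℂ] A', LinearMap.mul' ℂ W (map (conv f g) h z) =
      LinearMap.mul' ℂ W ((map (LinearMap.mul' ℂ W) LinearMap.id)
        ((map (map f g) h) ((map (Coalgebra.comul (R := ℂ)) LinearMap.id) z))) := by
    intro z
    induction z using TensorProduct.induction_on with
    | zero => simp
    | tmul x y => simp [conv_apply]
    | add u v hu hv => simp only [map_add, hu, hv]
  have key2 : ∀ z : A' ⊗[ℂ] A', LinearMap.mul' ℂ W (map f (conv g h) z) =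
      LinearMap.mul' ℂ W ((map LinearMap.id (LinearMap.mul' ℂ W))
        ((map f (map g h)) ((map LinearMap.id (Coalgebra.comul (R := ℂ))) z))) := by
    intro z
    induction z using TensorProduct.induction_on with
    | zero => simp
    | tmul x y => simp [conv_apply]
    | add u v hu hv => simp only [map_add, hu, hv]
  have key3 : ∀ z : (A' ⊗[ℂ] A') ⊗[ℂ] A',
      LinearMap.mul' ℂ W ((map (LinearMap.mul' ℂ W) LinearMap.id)
        ((map (map f g) h) z)) =
      LinearMap.mul' ℂ W ((map LinearMap.id (LinearMap.mul' ℂ W))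
        ((map f (map g h)) ((TensorProduct.assoc ℂ A' A' A').toLinearMap z))) := by
    intro z
    induction z using TensorProduct.induction_on with
    | zero => simp only [map_zero]
    | tmul u c =>
      induction u using TensorProduct.induction_on with
      | zero => simp only [map_zero, zero_tmul]
      | tmul x y =>
        simp only [TensorProduct.map_tmul, LinearEquiv.coe_coe, TensorProduct.assoc_tmul,
          LinearMap.mul'_apply, LinearMap.id_coe, id_eq]
        rw [mul_assoc]
      | add u1 u2 h1 h2 =>
        simp only [add_tmul, map_add, h1, h2]
    | add u v hu hv => simp only [map_add, hu, hv]
  have hco : (TensorProduct.assoc ℂ A' A' A').toLinearMap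
      ((map (Coalgebra.comul (R := ℂ)) LinearMap.id) (Coalgebra.comul (R := ℂ) a)) =
      (map LinearMap.id (Coalgebra.comul (R := ℂ))) (Coalgebra.comul (R := ℂ) a) :=
    Coalgebra.coassoc_apply a
  rw [conv_apply, conv_apply, key1, key2, key3, hco]

lemma conv_eunit_left (f : A' →ₗ[ℂ] W) : conv eunit f = f := by
  apply LinearMap.ext; intro a
  have e1 : (LinearMap.mul' ℂ W) ∘ₗ (map (eunit (W := W)) f) =
      ((LinearMap.mul' ℂ W) ∘ₗ (map (Algebra.linearMap ℂ W) f)) ∘ₗ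
        (LinearMap.rTensor A' (Coalgebra.counit (R := ℂ) (A := A'))) := by
    apply TensorProduct.ext'; intro x y
    simp [eunit, LinearMap.mul'_apply]
  have : conv eunit f a = ((LinearMap.mul' ℂ W) ∘ₗ (map (Algebra.linearMap ℂ W) f))
      ((LinearMap.rTensor A' (Coalgebra.counit (R := ℂ) (A := A'))) (Coalgebra.comul a)) := by
    rw [conv_apply, ← LinearMap.comp_apply ((LinearMap.mul' ℂ W)), e1]; rfl
  rw [this, Coalgebra.rTensor_counit_comul]
  simp [LinearMap.mul'_apply, Algebra.smul_def]

lemma conv_eunit_right (f : A' →ₗ[ℂ] W) : conv f eunit = f := by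
  apply LinearMap.ext; intro a
  have e1 : (LinearMap.mul' ℂ W) ∘ₗ (map f (eunit (W := W))) =
      ((LinearMap.mul' ℂ W) ∘ₗ (map f (Algebra.linearMap ℂ W))) ∘ₗ
        (LinearMap.lTensor A' (Coalgebra.counit (R := ℂ) (A := A'))) := by
    apply TensorProduct.ext'; intro x y
    simp [eunit, LinearMap.mul'_apply]
  have : conv f eunit a = ((LinearMap.mul' ℂ W) ∘ₗ (map f (Algebra.linearMap ℂ W)))
      ((LinearMap.lTensor A' (Coalgebra.counit (R := ℂ) (A := A'))) (Coalgebra.comul a)) := by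
    rw [conv_apply, ← LinearMap.comp_apply ((LinearMap.mul' ℂ W)), e1]; rfl
  rw [this, Coalgebra.lTensor_counit_comul]
  simp [LinearMap.mul'_apply, Algebra.smul_def, Algebra.commutes]

lemma conv_antipode_left (F : A' →ₐ[ℂ] W) :
    conv (F.toLinearMap ∘ₗ HopfAlgebra.antipode (R := ℂ)) F.toLinearMap =
      (eunit (A' := A') (W := W)) := by
  apply LinearMap.ext; intro a
  have e1 : (LinearMap.mul' ℂ W) ∘ₗ
      (map (F.toLinearMap ∘ₗ HopfAlgebra.antipode (R := ℂ)) F.toLinearMap) =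
      (F.toLinearMap ∘ₗ (LinearMap.mul' ℂ A')) ∘ₗ
        (LinearMap.rTensor A' (HopfAlgebra.antipode (R := ℂ) (A := A'))) := by
    apply TensorProduct.ext'; intro x y
    simp [LinearMap.mul'_apply]
  have : conv (F.toLinearMap ∘ₗ HopfAlgebra.antipode (R := ℂ)) F.toLinearMap a =
      F ((LinearMap.mul' ℂ A')
        ((LinearMap.rTensor A' (HopfAlgebra.antipode (R := ℂ) (A := A'))) (Coalgebra.comul a))) := by
    rw [conv_apply, ← LinearMap.comp_apply ((LinearMap.mul' ℂ W)), e1]; rfl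
  rw [this, HopfAlgebra.mul_antipode_rTensor_comul_apply]
  simp [eunit]

lemma conv_antipode_right (F : A' →ₐ[ℂ] W) :
    conv F.toLinearMap (F.toLinearMap ∘ₗ HopfAlgebra.antipode (R := ℂ)) =
      (eunit (A' := A') (W := W)) := by
  apply LinearMap.ext; intro a
  have e1 : (LinearMap.mul' ℂ W) ∘ₗ
      (map F.toLinearMap (F.toLinearMap ∘ₗ HopfAlgebra.antipode (R := ℂ))) =
      (F.toLinearMap ∘ₗ (LinearMap.mul' ℂ A')) ∘ₗ
        (LinearMap.lTensor A' (HopfAlgebra.antipode (R := ℂ) (A := A'))) := by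
    apply TensorProduct.ext'; intro x y
    simp [LinearMap.mul'_apply]
  have : conv F.toLinearMap (F.toLinearMap ∘ₗ HopfAlgebra.antipode (R := ℂ)) a =
      F ((LinearMap.mul' ℂ A')
        ((LinearMap.lTensor A' (HopfAlgebra.antipode (R := ℂ) (A := A'))) (Coalgebra.comul a))) := by
    rw [conv_apply, ← LinearMap.comp_apply ((LinearMap.mul' ℂ W)), e1]; rfl
  rw [this, HopfAlgebra.mul_antipode_lTensor_comul_apply]
  simp [eunit]

end ConvAux

section HatphiInv

variable {A : Type} [Ring A] [HopfAlgebra ℂ A] [StarRing A]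
variable {Gw : Type} [Ring Gw] [Algebra ℂ Gw]
variable (C : GroupCalc A Gw)

lemma GDSA.d_one {Ω : Type} [Ring Ω] [Algebra ℂ Ω] (S : GDSA Ω) : S.d 1 = 0 := by
  have h := S.leibniz S.one_mem (1 : Ω)
  simp only [mul_one, one_mul, pow_zero, one_smul] at h
  exact (add_eq_left.mp h.symm)

/-- The algebra homomorphism `j = (ι ⊗ ι) ∘ Δ : A → Gw ⊗ Gw`. -/
def jmap : A →ₐ[ℂ] Gw ⊗[ℂ] Gw :=
  (Algebra.TensorProduct.map C.ι C.ι).comp (Bialgebra.comulAlgHom ℂ A)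

lemma jmap_apply (a : A) :
    jmap C a = (map C.ι.toLinearMap C.ι.toLinearMap) (Coalgebra.comul (R := ℂ) a) := by
  show (Algebra.TensorProduct.map C.ι C.ι) (Coalgebra.comul (R := ℂ) a) = _
  generalize (Coalgebra.comul (R := ℂ) a : A ⊗[ℂ] A) = z
  induction z using TensorProduct.induction_on with
  | zero => simp
  | tmul x y => simp
  | add u v hu hv => rw [map_add, map_add, hu, hv]

lemma hatphi_iota (a : A) : C.hatφ (C.ι a) = jmap C a := by
  rw [C.hatφ_ι, jmap_apply]

/-- `hatφ ∘ d ∘ ι = (dι ⊗ ι + ι ⊗ dι) ∘ Δ`. -/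
lemma hatphi_d_iota (a : A) :
    C.hatφ (C.S.d (C.ι a)) =
      (map (C.S.d ∘ₗ C.ι.toLinearMap) C.ι.toLinearMap) (Coalgebra.comul (R := ℂ) a) +
      (map C.ι.toLinearMap (C.S.d ∘ₗ C.ι.toLinearMap)) (Coalgebra.comul (R := ℂ) a) := by
  rw [C.hatφ_d, hatphi_iota, jmap_apply]
  generalize (Coalgebra.comul (R := ℂ) a : A ⊗[ℂ] A) = z
  induction z using TensorProduct.induction_on with
  | zero => simp
  | tmul x y =>
    simp only [TensorProduct.map_tmul, LinearMap.coe_comp, Function.comp_apply]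
    rw [C.tdG_spec (C.ι.toLinearMap x) (C.ι.toLinearMap y) (by simpa using C.ι_mem x)]
    simp
  | add u v hu hv => simp only [map_add, hu, hv]; abel

end HatphiInv

section HatphiInv2

variable {A : Type} [Ring A] [HopfAlgebra ℂ A] [StarRing A]
variable {Gw : Type} [Ring Gw] [Algebra ℂ Gw]
variable (C : GroupCalc A Gw)

/-- Abbreviations used below. -/
def jk : A →ₗ[ℂ] Gw ⊗[ℂ] Gw := (jmap C).toLinearMap ∘ₗ HopfAlgebra.antipode (R := ℂ)

def diota : A →ₗ[ℂ] Gw := C.S.d ∘ₗ C.ι.toLinearMap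

def K1lin : A →ₗ[ℂ] Gw ⊗[ℂ] Gw :=
  (map (diota C) C.ι.toLinearMap) ∘ₗ (Coalgebra.comul (R := ℂ))

def K2lin : A →ₗ[ℂ] Gw ⊗[ℂ] Gw :=
  (map C.ι.toLinearMap (diota C)) ∘ₗ (Coalgebra.comul (R := ℂ))

def incl1lin : Gw →ₗ[ℂ] Gw ⊗[ℂ] Gw :=
  (Algebra.TensorProduct.includeLeft (R := ℂ) (A := Gw) (B := Gw)).toLinearMap

def incl2lin : Gw →ₗ[ℂ] Gw ⊗[ℂ] Gw :=
  (Algebra.TensorProduct.includeRight (R := ℂ) (A := Gw) (B := Gw)).toLinearMap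

lemma incl1lin_apply (x : Gw) : incl1lin (Gw := Gw) x = x ⊗ₜ 1 := rfl
lemma incl2lin_apply (x : Gw) : incl2lin (Gw := Gw) x = 1 ⊗ₜ x := rfl

/-- The graded product `tmulG` coincides with the ordinary tensor product
multiplication when applied to the relevant degree-controlled elements. -/
lemma tmulG_plain (z w : A ⊗[ℂ] A) :
    C.tmulG ((map C.ι.toLinearMap C.ι.toLinearMap) z)
        ((map (diota C) C.ι.toLinearMap + map C.ι.toLinearMap (diota C)) w) =
      ((map C.ι.toLinearMap C.ι.toLinearMap) z) *
        ((map (diota C) C.ι.toLinearMap + map C.ι.toLinearMap (diota C)) w) := by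
  induction z using TensorProduct.induction_on with
  | zero => simp
  | tmul x y =>
    induction w using TensorProduct.induction_on with
    | zero => simp
    | tmul u v =>
      have h1 : C.tmulG (C.ι.toLinearMap x ⊗ₜ C.ι.toLinearMap y)
          ((diota C) u ⊗ₜ C.ι.toLinearMap v) =
          ((C.ι.toLinearMap x * (diota C) u) ⊗ₜ (C.ι.toLinearMap y * C.ι.toLinearMap v)) := by
        rw [C.tmulG_spec (m := 0) (n := 1) _ _ _ _ (by simpa using C.ι_mem y)
          (by simpa [diota] using C.S.d_mem (C.ι_mem u))]
        simp
      have h2 : C.tmulG (C.ι.toLinearMap x ⊗ₜ C.ι.toLinearMap y)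
          (C.ι.toLinearMap u ⊗ₜ (diota C) v) =
          ((C.ι.toLinearMap x * C.ι.toLinearMap u) ⊗ₜ (C.ι.toLinearMap y * (diota C) v)) := by
        rw [C.tmulG_spec (m := 0) (n := 0) _ _ _ _ (by simpa using C.ι_mem y)
          (by simpa using C.ι_mem u)]
        simp
      simp only [LinearMap.add_apply, TensorProduct.map_tmul, map_add, h1, h2,
        Algebra.TensorProduct.tmul_mul_tmul, mul_add]
    | add w1 w2 hw1 hw2 =>
      simp only [map_add, mul_add] at hw1 hw2 ⊢
      rw [hw1, hw2]
  | add z1 z2 hz1 hz2 =>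
    simp only [map_add, LinearMap.add_apply, add_mul] at hz1 hz2 ⊢
    rw [← hz1, ← hz2]
    abel

lemma hatphi_d_iota_eq : C.hatφ ∘ₗ (diota C) = K1lin C + K2lin C := by
  apply LinearMap.ext; intro a
  simpa [diota, K1lin, K2lin] using hatphi_d_iota C a

lemma E1 : C.hatφ ∘ₗ C.π = conv (jk C) (C.hatφ ∘ₗ (diota C)) := by
  apply LinearMap.ext; intro a
  rw [LinearMap.comp_apply, C.π_eq]
  show C.hatφ (LinearMap.mul' ℂ Gw ((map (C.ι.toLinearMap ∘ₗ HopfAlgebra.antipode (R := ℂ))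
    (C.S.d ∘ₗ C.ι.toLinearMap)) (Coalgebra.comul (R := ℂ) a))) = _
  rw [conv_apply]
  generalize (Coalgebra.comul (R := ℂ) a : A ⊗[ℂ] A) = z
  induction z using TensorProduct.induction_on with
  | zero => simp
  | tmul x y =>
    simp only [TensorProduct.map_tmul, LinearMap.mul'_apply, LinearMap.coe_comp,
      Function.comp_apply]
    rw [C.hatφ_mul]
    have hx : C.hatφ (C.ι.toLinearMap (HopfAlgebra.antipode (R := ℂ) x)) =
        (map C.ι.toLinearMap C.ι.toLinearMap)
          (Coalgebra.comul (R := ℂ) (HopfAlgebra.antipode (R := ℂ) x)) := by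
      exact (hatphi_iota C _).trans (jmap_apply C _)
    have hy : C.hatφ (C.S.d (C.ι.toLinearMap y)) =
        (map (diota C) C.ι.toLinearMap + map C.ι.toLinearMap (diota C))
          (Coalgebra.comul (R := ℂ) y) := by
      simpa [diota] using hatphi_d_iota C y
    have hjk : (jk C) x = (map C.ι.toLinearMap C.ι.toLinearMap)
        (Coalgebra.comul (R := ℂ) (HopfAlgebra.antipode (R := ℂ) x)) := by
      simp [jk, jmap_apply]
    have hy2 : C.hatφ ((diota C) y) =
        (map (diota C) C.ι.toLinearMap + map C.ι.toLinearMap (diota C))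
          (Coalgebra.comul (R := ℂ) y) := hy
    rw [hx, hy, tmulG_plain, hjk, hy2]
  | add u v hu hv => simp only [map_add, hu, hv]

end HatphiInv2

section HatphiInv3

variable {A : Type} [Ring A] [HopfAlgebra ℂ A] [StarRing A]
variable {Gw : Type} [Ring Gw] [Algebra ℂ Gw]
variable (C : GroupCalc A Gw)

lemma phi2_apply (z : Gw ⊗[ℂ] A) :
    (Algebra.TensorProduct.map (AlgHom.id ℂ Gw) C.ι) z =
      (map LinearMap.id C.ι.toLinearMap) z := by
  induction z using TensorProduct.induction_on with
  | zero => simp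
  | tmul x y => simp
  | add u v hu hv => rw [map_add, map_add, hu, hv]

lemma E2 : (map LinearMap.id C.ι.toLinearMap) ∘ₗ C.adj ∘ₗ C.π =
    conv (jk C) (K1lin C) := by
  apply LinearMap.ext; intro a
  simp only [LinearMap.comp_apply]
  rw [C.π_eq, conv_apply]
  show (map LinearMap.id C.ι.toLinearMap) (C.adj (LinearMap.mul' ℂ Gw
    ((map (C.ι.toLinearMap ∘ₗ HopfAlgebra.antipode (R := ℂ))
      (C.S.d ∘ₗ C.ι.toLinearMap)) (Coalgebra.comul (R := ℂ) a)))) = _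
  generalize (Coalgebra.comul (R := ℂ) a : A ⊗[ℂ] A) = z
  induction z using TensorProduct.induction_on with
  | zero => simp
  | tmul x y =>
    simp only [TensorProduct.map_tmul, LinearMap.mul'_apply, LinearMap.coe_comp,
      Function.comp_apply]
    rw [C.adj_mul, ← phi2_apply, map_mul, phi2_apply, phi2_apply]
    have h1 : (map LinearMap.id C.ι.toLinearMap)
        (C.adj (C.ι.toLinearMap (HopfAlgebra.antipode (R := ℂ) x))) = (jk C) x := by
      have : C.adj (C.ι (HopfAlgebra.antipode (R := ℂ) x)) =
          (map C.ι.toLinearMap LinearMap.id)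
            (Coalgebra.comul (R := ℂ) (HopfAlgebra.antipode (R := ℂ) x)) :=
        C.adj_ι (HopfAlgebra.antipode (R := ℂ) x)
      rw [show C.ι.toLinearMap (HopfAlgebra.antipode (R := ℂ) x) =
        C.ι (HopfAlgebra.antipode (R := ℂ) x) from rfl, this, jk]
      simp only [LinearMap.comp_apply, AlgHom.toLinearMap_apply, jmap_apply]
      generalize (Coalgebra.comul (R := ℂ) (HopfAlgebra.antipode (R := ℂ) x) : A ⊗[ℂ] A) = w
      induction w using TensorProduct.induction_on with
      | zero => simp
      | tmul u v => simp
      | add u v hu hv => rw [map_add, map_add, map_add, hu, hv]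
    have h2 : (map LinearMap.id C.ι.toLinearMap) (C.adj (C.S.d (C.ι.toLinearMap y))) =
        (K1lin C) y := by
      rw [show C.S.d (C.ι.toLinearMap y) = C.S.d (C.ι y) from rfl, C.adj_d, C.adj_ι]
      rw [K1lin]
      simp only [LinearMap.comp_apply]
      generalize (Coalgebra.comul (R := ℂ) y : A ⊗[ℂ] A) = w
      induction w using TensorProduct.induction_on with
      | zero => simp
      | tmul u v => simp [diota]
      | add u v hu hv => simp only [map_add, hu, hv]
    rw [h1, h2]
  | add u v hu hv => simp only [map_add, hu, hv]

lemma s0lem : (jmap C).toLinearMap =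
    conv (incl1lin ∘ₗ C.ι.toLinearMap) (incl2lin ∘ₗ C.ι.toLinearMap) := by
  apply LinearMap.ext; intro a
  rw [conv_apply]
  simp only [AlgHom.toLinearMap_apply, jmap_apply]
  generalize (Coalgebra.comul (R := ℂ) a : A ⊗[ℂ] A) = z
  induction z using TensorProduct.induction_on with
  | zero => simp
  | tmul x y =>
    simp [incl1lin_apply, incl2lin_apply, LinearMap.mul'_apply,
      Algebra.TensorProduct.tmul_mul_tmul]
  | add u v hu hv => simp only [map_add, hu, hv]

lemma s2lem : K2lin C = conv (incl1lin ∘ₗ C.ι.toLinearMap) (incl2lin ∘ₗ (diota C)) := by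
  apply LinearMap.ext; intro a
  rw [conv_apply, K2lin]
  simp only [LinearMap.comp_apply]
  generalize (Coalgebra.comul (R := ℂ) a : A ⊗[ℂ] A) = z
  induction z using TensorProduct.induction_on with
  | zero => simp
  | tmul x y =>
    simp [incl1lin_apply, incl2lin_apply, LinearMap.mul'_apply,
      Algebra.TensorProduct.tmul_mul_tmul]
  | add u v hu hv => simp only [map_add, hu, hv]

omit [StarRing A] in
lemma eunit_comp {W W' : Type} [Ring W] [Algebra ℂ W] [Ring W'] [Algebra ℂ W']
    (Φ : W →ₐ[ℂ] W') :
    Φ.toLinearMap ∘ₗ (eunit (A' := A) (W := W)) = eunit := by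
  apply LinearMap.ext; intro a
  simp [eunit]

lemma s4lem : conv (incl2lin ∘ₗ C.ι.toLinearMap)
    (incl2lin ∘ₗ (C.ι.toLinearMap ∘ₗ HopfAlgebra.antipode (R := ℂ))) =
    (eunit (A' := A) (W := Gw ⊗[ℂ] Gw)) := by
  have h := (conv_comp_algHom (Algebra.TensorProduct.includeRight (R := ℂ) (A := Gw)
    (B := Gw)) C.ι.toLinearMap (C.ι.toLinearMap ∘ₗ HopfAlgebra.antipode (R := ℂ))).symm
  rw [show (Algebra.TensorProduct.includeRight (R := ℂ) (A := Gw) (B := Gw)).toLinearMap =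
    incl2lin from rfl] at h
  rw [h, conv_antipode_right C.ι]
  exact eunit_comp _

lemma claimA : conv (jmap C).toLinearMap
    (incl2lin ∘ₗ C.ι.toLinearMap ∘ₗ HopfAlgebra.antipode (R := ℂ)) =
    incl1lin ∘ₗ C.ι.toLinearMap := by
  rw [s0lem, conv_assoc, s4lem, conv_eunit_right]

lemma claimG : conv (jk C) (incl1lin ∘ₗ C.ι.toLinearMap) =
    incl2lin ∘ₗ C.ι.toLinearMap ∘ₗ HopfAlgebra.antipode (R := ℂ) := by
  rw [← claimA, ← conv_assoc, jk, conv_antipode_left (jmap C), conv_eunit_left]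

lemma E3 : conv (jk C) (K2lin C) = incl2lin ∘ₗ C.π := by
  rw [s2lem, ← conv_assoc, claimG]
  have h := (conv_comp_algHom (Algebra.TensorProduct.includeRight (R := ℂ) (A := Gw)
    (B := Gw)) (C.ι.toLinearMap ∘ₗ HopfAlgebra.antipode (R := ℂ)) (diota C)).symm
  rw [show (Algebra.TensorProduct.includeRight (R := ℂ) (A := Gw) (B := Gw)).toLinearMap =
    incl2lin from rfl] at h
  rw [h]
  congr 1
  rw [C.π_eq]
  rfl

lemma hatphi_pi : C.hatφ ∘ₗ C.π =
    (map LinearMap.id C.ι.toLinearMap) ∘ₗ C.adj ∘ₗ C.π + incl2lin ∘ₗ C.π := by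
  rw [E1, hatphi_d_iota_eq, conv_add_right, ← E2, ← E3, E2]

lemma hatphi_inv (θ : ↥(C.Inv 1)) :
    C.hatφ (θ : Gw) = (map LinearMap.id C.ι.toLinearMap) (C.adj (θ : Gw)) +
      (1 : Gw) ⊗ₜ[ℂ] (θ : Gw) := by
  obtain ⟨a, ha⟩ := C.π_surj (θ : Gw) θ.2
  rw [← ha]
  have h := LinearMap.congr_fun (hatphi_pi C) a
  simpa [incl2lin_apply] using h

end HatphiInv3



section GenHelpers

variable {M₁ M₂ M₃ N₁ N₂ N₃ : Type}
variable [AddCommGroup M₁] [Module ℂ M₁] [AddCommGroup M₂] [Module ℂ M₂]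
variable [AddCommGroup M₃] [Module ℂ M₃] [AddCommGroup N₁] [Module ℂ N₁]
variable [AddCommGroup N₂] [Module ℂ N₂] [AddCommGroup N₃] [Module ℂ N₃]

lemma map_map (f₂ : M₂ →ₗ[ℂ] M₃) (f₁ : M₁ →ₗ[ℂ] M₂) (g₂ : N₂ →ₗ[ℂ] N₃)
    (g₁ : N₁ →ₗ[ℂ] N₂) (z : M₁ ⊗[ℂ] N₁) :
    map f₂ g₂ (map f₁ g₁ z) = map (f₂ ∘ₗ f₁) (g₂ ∘ₗ g₁) z :=
  (TensorProduct.map_map f₂ g₂ f₁ g₁ z)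

lemma map_sub_left (f g : M₁ →ₗ[ℂ] M₂) (h : N₁ →ₗ[ℂ] N₂) :
    map (f - g) h = map f h - map g h := by
  apply TensorProduct.ext'
  intro x y
  simp [sub_tmul]

end GenHelpers

set_option maxHeartbeats 1000000
set_option synthInstance.maxHeartbeats 400000

section MainAux

variable {A : Type} [Ring A] [HopfAlgebra ℂ A] [StarRing A]
variable {Gw : Type} [Ring Gw] [Algebra ℂ Gw]
variable {V B : Type} [Ring V] [Algebra ℂ V] [StarRing V] [Ring B] [Algebra ℂ B] [StarRing B]
variable {Ω : Type} [Ring Ω] [Algebra ℂ Ω]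
variable {C : GroupCalc A Gw} {P : QPB A V B}

/-- `θ' ⊗ θ'' ↦ Σ θ'ₖ ⊗ ι(aₖ)·θ''` where `ϖ(θ') = Σ θ'ₖ ⊗ aₖ`. -/
def PhiA (C : GroupCalc A Gw) :
    ↥(C.Inv 1) ⊗[ℂ] ↥(C.Inv 1) →ₗ[ℂ] ↥(C.Inv 1) ⊗[ℂ] Gw :=
  (map LinearMap.id (LinearMap.mul' ℂ Gw)) ∘ₗ
    (TensorProduct.assoc ℂ ↥(C.Inv 1) Gw Gw).toLinearMap ∘ₗ
    (map ((map LinearMap.id C.ι.toLinearMap) ∘ₗ C.adjInv) (C.Inv 1).subtype)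

/-- `θ' ⊗ θ'' ↦ Σ θ''ₖ ⊗ θ'·ι(bₖ)` where `ϖ(θ'') = Σ θ''ₖ ⊗ bₖ`. -/
def PhiB (C : GroupCalc A Gw) :
    ↥(C.Inv 1) ⊗[ℂ] ↥(C.Inv 1) →ₗ[ℂ] ↥(C.Inv 1) ⊗[ℂ] Gw :=
  (map LinearMap.id ((LinearMap.mul' ℂ Gw) ∘ₗ (TensorProduct.comm ℂ Gw Gw).toLinearMap)) ∘ₗ
    (TensorProduct.assoc ℂ ↥(C.Inv 1) Gw Gw).toLinearMap ∘ₗ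
    (map ((map LinearMap.id C.ι.toLinearMap) ∘ₗ C.adjInv) (C.Inv 1).subtype) ∘ₗ
    (TensorProduct.comm ℂ ↥(C.Inv 1) ↥(C.Inv 1)).toLinearMap

variable (O : Calc A Gw V B Ω C P)

/-- Evaluation of `td` on the image of `ω ⊗ ι`. -/
lemma M1 (ω : ↥(C.Inv 1) →ₗ[ℂ] Ω) (h1 : ∀ p, ω p ∈ O.S.gr 1) (U : ↥(C.Inv 1) ⊗[ℂ] A) :
    O.td ((map ω C.ι.toLinearMap) U) =
      (map (O.S.d ∘ₗ ω) C.ι.toLinearMap) U - (map ω (C.S.d ∘ₗ C.ι.toLinearMap)) U := by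
  induction U using TensorProduct.induction_on with
  | zero => simp
  | tmul p a =>
    simp only [TensorProduct.map_tmul, LinearMap.coe_comp, Function.comp_apply]
    rw [O.td_spec (n := 1) (ω p) (C.ι.toLinearMap a) (h1 p)]
    simp [sub_eq_add_neg]
  | add u v hu hv => simp only [map_add, hu, hv]; abel

/-- `F̂(d ω(θ))`. -/
lemma M2 (ω : ↥(C.Inv 1) →ₗ[ℂ] Ω) (h1 : ∀ p, ω p ∈ O.S.gr 1)
    (hF : ∀ p, O.Fh (ω p) =
      (map LinearMap.id C.ι.toLinearMap) ((map ω LinearMap.id) (C.adjInv p)) +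
        (1 : Ω) ⊗ₜ ((p : ↥(C.Inv 1)) : Gw)) (θ : ↥(C.Inv 1)) :
    O.Fh (O.S.d (ω θ)) =
      (map (O.S.d ∘ₗ ω) C.ι.toLinearMap) (C.adjInv θ) -
        (map ω (C.S.d ∘ₗ C.ι.toLinearMap)) (C.adjInv θ) +
        (1 : Ω) ⊗ₜ C.S.d ((θ : Gw)) := by
  rw [O.Fh_d, hF θ, map_add]
  rw [_root_.map_map, LinearMap.id_comp, LinearMap.comp_id, M1 O ω h1]
  congr 1
  rw [O.td_spec (n := 0) (1 : Ω) ((θ : Gw)) O.S.one_mem, O.S.d_one]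
  simp


/-- Cross term B: `tmul (ω⊗ι)(U) (1 ⊗ y)`. -/
lemma cB (ω : ↥(C.Inv 1) →ₗ[ℂ] Ω) (y : ↥(C.Inv 1)) (U : ↥(C.Inv 1) ⊗[ℂ] A) :
    O.tmul ((map ω C.ι.toLinearMap) U) ((1 : Ω) ⊗ₜ ((y : Gw))) =
      (map ω LinearMap.id) ((map LinearMap.id (LinearMap.mul' ℂ Gw))
        ((TensorProduct.assoc ℂ ↥(C.Inv 1) Gw Gw).toLinearMap
          (((map LinearMap.id C.ι.toLinearMap) U) ⊗ₜ ((y : Gw))))) := by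
  induction U using TensorProduct.induction_on with
  | zero => simp only [map_zero, zero_tmul, LinearMap.zero_apply]
  | tmul p a =>
    simp only [TensorProduct.map_tmul, LinearEquiv.coe_coe, TensorProduct.assoc_tmul,
      LinearMap.mul'_apply, LinearMap.id_coe, id_eq]
    rw [O.tmul_spec (m := 0) (n := 0) (ω p) 1 (C.ι.toLinearMap a) ((y : Gw))
      (by simpa using C.ι_mem a) O.S.one_mem]
    simp
  | add u v hu hv =>
    simp only [map_add, add_tmul, LinearMap.add_apply, hu, hv]

/-- Cross term C: `tmul (1 ⊗ x) ((ω⊗ι)(V))`. -/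
lemma cC (ω : ↥(C.Inv 1) →ₗ[ℂ] Ω) (h1 : ∀ p, ω p ∈ O.S.gr 1) (x : ↥(C.Inv 1))
    (V : ↥(C.Inv 1) ⊗[ℂ] A) :
    O.tmul ((1 : Ω) ⊗ₜ ((x : Gw))) ((map ω C.ι.toLinearMap) V) =
      - (map ω LinearMap.id) ((map LinearMap.id
          ((LinearMap.mul' ℂ Gw) ∘ₗ (TensorProduct.comm ℂ Gw Gw).toLinearMap))
        ((TensorProduct.assoc ℂ ↥(C.Inv 1) Gw Gw).toLinearMap
          (((map LinearMap.id C.ι.toLinearMap) V) ⊗ₜ ((x : Gw))))) := by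
  induction V using TensorProduct.induction_on with
  | zero => simp only [map_zero, zero_tmul, LinearMap.zero_apply, neg_zero]
  | tmul q b =>
    simp only [TensorProduct.map_tmul, LinearEquiv.coe_coe, TensorProduct.assoc_tmul,
      LinearMap.coe_comp, Function.comp_apply, TensorProduct.comm_tmul,
      LinearMap.mul'_apply, LinearMap.id_coe, id_eq]
    rw [O.tmul_spec (m := 1) (n := 1) 1 (ω q) ((x : Gw)) (C.ι.toLinearMap b)
      (C.Inv_le 1 x.2) (h1 q)]
    simp
  | add u v hu hv =>
    simp only [map_add, add_tmul, LinearMap.add_apply, hu, hv, neg_add]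

/-- The four-term expansion of `F̂(ω(x)·ω(y))`. -/
lemma M3 (ω : ↥(C.Inv 1) →ₗ[ℂ] Ω) (h1 : ∀ p, ω p ∈ O.S.gr 1)
    (hF : ∀ p, O.Fh (ω p) =
      (map LinearMap.id C.ι.toLinearMap) ((map ω LinearMap.id) (C.adjInv p)) +
        (1 : Ω) ⊗ₜ ((p : ↥(C.Inv 1)) : Gw)) (x y : ↥(C.Inv 1)) :
    O.Fh (ω x * ω y) =
      TensorProduct.lift O.tmul ((map ((map ω C.ι.toLinearMap) ∘ₗ C.adjInv)
        ((map ω C.ι.toLinearMap) ∘ₗ C.adjInv)) (x ⊗ₜ y)) +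
      (map ω LinearMap.id) (PhiA C (x ⊗ₜ y)) -
      (map ω LinearMap.id) (PhiB C (x ⊗ₜ y)) +
      (1 : Ω) ⊗ₜ ((x : Gw) * (y : Gw)) := by
  rw [O.Fh_mul, hF x, hF y, _root_.map_map, LinearMap.id_comp, LinearMap.comp_id]
  rw [_root_.map_map, LinearMap.id_comp, LinearMap.comp_id]
  simp only [map_add, LinearMap.add_apply]
  rw [cB O ω y (C.adjInv x), cC O ω h1 x (C.adjInv y)]
  have cD : O.tmul ((1 : Ω) ⊗ₜ ((x : Gw))) ((1 : Ω) ⊗ₜ ((y : Gw))) =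
      (1 : Ω) ⊗ₜ ((x : Gw) * (y : Gw)) := by
    rw [O.tmul_spec (m := 1) (n := 0) 1 1 ((x : Gw)) ((y : Gw))
      (C.Inv_le 1 x.2) O.S.one_mem]
    simp
  rw [cD]
  have hQa : TensorProduct.lift O.tmul ((map ((map ω C.ι.toLinearMap) ∘ₗ C.adjInv)
      ((map ω C.ι.toLinearMap) ∘ₗ C.adjInv)) (x ⊗ₜ y)) =
      O.tmul ((map ω C.ι.toLinearMap) (C.adjInv x))
        ((map ω C.ι.toLinearMap) (C.adjInv y)) := by
    simp [TensorProduct.lift.tmul]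
  have hPA : PhiA C (x ⊗ₜ y) = (map LinearMap.id (LinearMap.mul' ℂ Gw))
      ((TensorProduct.assoc ℂ ↥(C.Inv 1) Gw Gw).toLinearMap
        (((map LinearMap.id C.ι.toLinearMap) (C.adjInv x)) ⊗ₜ ((y : Gw)))) := rfl
  have hPB : PhiB C (x ⊗ₜ y) = (map LinearMap.id
      ((LinearMap.mul' ℂ Gw) ∘ₗ (TensorProduct.comm ℂ Gw Gw).toLinearMap))
      ((TensorProduct.assoc ℂ ↥(C.Inv 1) Gw Gw).toLinearMap
        (((map LinearMap.id C.ι.toLinearMap) (C.adjInv y)) ⊗ₜ ((x : Gw)))) := rfl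
  rw [hQa, hPA, hPB]
  abel


/-- Identification of the `⟨ω,ω⟩ ⊗ ι` term using equivariance of `δ`. -/
lemma M4 (δ : ↥(C.Inv 1) →ₗ[ℂ] ↥(C.Inv 1) ⊗[ℂ] ↥(C.Inv 1))
    (hδ1 : ∀ θ, adjInv2 C (δ θ) = (map δ LinearMap.id) (C.adjInv θ))
    (ω : ↥(C.Inv 1) →ₗ[ℂ] Ω) (h1 : ∀ p, ω p ∈ O.S.gr 1) (θ : ↥(C.Inv 1)) :
    TensorProduct.lift O.tmul ((map ((map ω C.ι.toLinearMap) ∘ₗ C.adjInv)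
        ((map ω C.ι.toLinearMap) ∘ₗ C.adjInv)) (δ θ)) =
      (map (bra C δ ω ω) C.ι.toLinearMap) (C.adjInv θ) := by
  have key : TensorProduct.lift O.tmul ∘ₗ (map ((map ω C.ι.toLinearMap) ∘ₗ C.adjInv)
      ((map ω C.ι.toLinearMap) ∘ₗ C.adjInv)) =
      (map ((LinearMap.mul' ℂ Ω) ∘ₗ (map ω ω)) C.ι.toLinearMap) ∘ₗ adjInv2 C := by
    apply TensorProduct.ext'
    intro x y
    simp only [LinearMap.comp_apply, TensorProduct.map_tmul, TensorProduct.lift.tmul]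
    have hA2 : adjInv2 C (x ⊗ₜ y) = (map LinearMap.id (LinearMap.mul' ℂ A))
        ((tensorTensorTensorComm ℂ ↥(C.Inv 1) A ↥(C.Inv 1) A).toLinearMap
          ((C.adjInv x) ⊗ₜ (C.adjInv y))) := rfl
    rw [hA2]
    generalize C.adjInv x = U
    generalize C.adjInv y = V
    induction U using TensorProduct.induction_on with
    | zero => simp only [map_zero, zero_tmul, LinearMap.zero_apply]
    | tmul p a =>
      induction V using TensorProduct.induction_on with
      | zero => simp only [map_zero, tmul_zero, LinearMap.map_zero]
      | tmul q b =>
        simp only [TensorProduct.map_tmul, LinearEquiv.coe_coe,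
          tensorTensorTensorComm_tmul, LinearMap.mul'_apply, LinearMap.coe_comp,
          Function.comp_apply, LinearMap.id_coe, id_eq]
        rw [O.tmul_spec (m := 0) (n := 1) (ω p) (ω q) (C.ι.toLinearMap a)
          (C.ι.toLinearMap b) (by simpa using C.ι_mem a) (h1 q)]
        simp only [pow_zero, Nat.zero_mul, one_smul, AlgHom.toLinearMap_apply, map_mul]
      | add u v hu hv =>
        simp only [map_add, tmul_add, LinearMap.map_add, hu, hv]
    | add u v hu hv =>
      simp only [map_add, add_tmul, LinearMap.map_add, LinearMap.add_apply, hu, hv]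
  have hk := LinearMap.congr_fun key (δ θ)
  simp only [LinearMap.comp_apply] at hk
  rw [hk, hδ1 θ, TensorProduct.map_map, LinearMap.comp_id, LinearMap.comp_assoc]
  rfl

/-- `F̂⟨ω,ω⟩(θ)`, fully expanded. -/
lemma M5 (δ : ↥(C.Inv 1) →ₗ[ℂ] ↥(C.Inv 1) ⊗[ℂ] ↥(C.Inv 1))
    (hδ1 : ∀ θ, adjInv2 C (δ θ) = (map δ LinearMap.id) (C.adjInv θ))
    (hδ2 : ∀ θ : ↥(C.Inv 1), (LinearMap.mul' ℂ Gw)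
      ((map (C.Inv 1).subtype (C.Inv 1).subtype) (δ θ)) = C.S.d ((θ : Gw)))
    (ω : ↥(C.Inv 1) →ₗ[ℂ] Ω) (h1 : ∀ p, ω p ∈ O.S.gr 1)
    (hF : ∀ p, O.Fh (ω p) =
      (map LinearMap.id C.ι.toLinearMap) ((map ω LinearMap.id) (C.adjInv p)) +
        (1 : Ω) ⊗ₜ ((p : ↥(C.Inv 1)) : Gw)) (θ : ↥(C.Inv 1)) :
    O.Fh (bra C δ ω ω θ) =
      (map (bra C δ ω ω) C.ι.toLinearMap) (C.adjInv θ) +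
      (map ω LinearMap.id) (PhiA C (δ θ)) -
      (map ω LinearMap.id) (PhiB C (δ θ)) +
      (1 : Ω) ⊗ₜ C.S.d ((θ : Gw)) := by
  have hbra : bra C δ ω ω θ = LinearMap.mul' ℂ Ω ((map ω ω) (δ θ)) := rfl
  have claim1 : ∀ D : ↥(C.Inv 1) ⊗[ℂ] ↥(C.Inv 1),
      O.Fh (LinearMap.mul' ℂ Ω ((map ω ω) D)) =
        TensorProduct.lift O.tmul ((map (O.Fh ∘ₗ ω) (O.Fh ∘ₗ ω)) D) := by
    intro D
    induction D using TensorProduct.induction_on with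
    | zero => simp
    | tmul x y =>
      simp only [TensorProduct.map_tmul, LinearMap.mul'_apply, LinearMap.coe_comp,
        Function.comp_apply, TensorProduct.lift.tmul]
      exact O.Fh_mul _ _
    | add u v hu hv => simp only [map_add, hu, hv]
  have claim2 : ∀ D : ↥(C.Inv 1) ⊗[ℂ] ↥(C.Inv 1),
      TensorProduct.lift O.tmul ((map (O.Fh ∘ₗ ω) (O.Fh ∘ₗ ω)) D) =
        TensorProduct.lift O.tmul ((map ((map ω C.ι.toLinearMap) ∘ₗ C.adjInv)
          ((map ω C.ι.toLinearMap) ∘ₗ C.adjInv)) D) +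
        (map ω LinearMap.id) (PhiA C D) - (map ω LinearMap.id) (PhiB C D) +
        (TensorProduct.mk ℂ Ω Gw 1) ((LinearMap.mul' ℂ Gw)
          ((map (C.Inv 1).subtype (C.Inv 1).subtype) D)) := by
    intro D
    induction D using TensorProduct.induction_on with
    | zero => simp
    | tmul x y =>
      simp only [TensorProduct.map_tmul, LinearMap.coe_comp, Function.comp_apply,
        TensorProduct.lift.tmul, LinearMap.mul'_apply, TensorProduct.mk_apply,
        Submodule.coe_subtype]
      rw [← O.Fh_mul, M3 O ω h1 hF x y]
      simp only [TensorProduct.map_tmul, LinearMap.coe_comp, Function.comp_apply,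
        TensorProduct.lift.tmul]
    | add u v hu hv =>
      simp only [map_add, hu, hv]
      abel
  rw [hbra, claim1 (δ θ), claim2 (δ θ), M4 O δ hδ1 ω h1 θ, hδ2 θ]
  rfl


/-- `tdG` on the image of `J ⊗ ι`. -/
lemma w1aux (W : ↥(C.Inv 1) ⊗[ℂ] A) :
    C.tdG ((map (C.Inv 1).subtype C.ι.toLinearMap) W) =
      (map (C.S.d ∘ₗ (C.Inv 1).subtype) C.ι.toLinearMap) W -
        (map (C.Inv 1).subtype (C.S.d ∘ₗ C.ι.toLinearMap)) W := by
  induction W using TensorProduct.induction_on with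
  | zero => simp
  | tmul p a =>
    simp only [TensorProduct.map_tmul, LinearMap.coe_comp, Function.comp_apply,
      Submodule.coe_subtype]
    rw [C.tdG_spec (n := 1) ((p : Gw)) (C.ι.toLinearMap a) (C.Inv_le 1 p.2)]
    simp [sub_eq_add_neg]
  | add u v hu hv => simp only [map_add, hu, hv]; abel

/-- First computation of `φ̂(dθ)`. -/
lemma w1 (θ : ↥(C.Inv 1)) :
    C.hatφ (C.S.d ((θ : Gw))) =
      (map (C.S.d ∘ₗ (C.Inv 1).subtype) C.ι.toLinearMap) (C.adjInv θ) -
        (map (C.Inv 1).subtype (C.S.d ∘ₗ C.ι.toLinearMap)) (C.adjInv θ) +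
        (1 : Gw) ⊗ₜ C.S.d ((θ : Gw)) := by
  rw [C.hatφ_d, hatphi_inv C θ, ← C.adjInv_spec θ, _root_.map_map, LinearMap.id_comp,
    LinearMap.comp_id, map_add, w1aux]
  congr 1
  rw [C.tdG_spec (n := 0) (1 : Gw) ((θ : Gw)) C.S.one_mem, C.S.d_one]
  simp

lemma cBg (y : ↥(C.Inv 1)) (U : ↥(C.Inv 1) ⊗[ℂ] A) :
    C.tmulG ((map (C.Inv 1).subtype C.ι.toLinearMap) U) ((1 : Gw) ⊗ₜ ((y : Gw))) =
      (map (C.Inv 1).subtype LinearMap.id) ((map LinearMap.id (LinearMap.mul' ℂ Gw))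
        ((TensorProduct.assoc ℂ ↥(C.Inv 1) Gw Gw).toLinearMap
          (((map LinearMap.id C.ι.toLinearMap) U) ⊗ₜ ((y : Gw))))) := by
  induction U using TensorProduct.induction_on with
  | zero => simp only [map_zero, zero_tmul, LinearMap.zero_apply]
  | tmul p a =>
    simp only [TensorProduct.map_tmul, LinearEquiv.coe_coe, TensorProduct.assoc_tmul,
      LinearMap.mul'_apply, LinearMap.id_coe, id_eq, Submodule.coe_subtype]
    rw [C.tmulG_spec (m := 0) (n := 0) ((p : Gw)) 1 (C.ι.toLinearMap a) ((y : Gw))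
      (by simpa using C.ι_mem a) C.S.one_mem]
    simp
  | add u v hu hv =>
    simp only [map_add, add_tmul, LinearMap.add_apply, hu, hv]

lemma cCg (x : ↥(C.Inv 1)) (V : ↥(C.Inv 1) ⊗[ℂ] A) :
    C.tmulG ((1 : Gw) ⊗ₜ ((x : Gw))) ((map (C.Inv 1).subtype C.ι.toLinearMap) V) =
      - (map (C.Inv 1).subtype LinearMap.id) ((map LinearMap.id
          ((LinearMap.mul' ℂ Gw) ∘ₗ (TensorProduct.comm ℂ Gw Gw).toLinearMap))
        ((TensorProduct.assoc ℂ ↥(C.Inv 1) Gw Gw).toLinearMap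
          (((map LinearMap.id C.ι.toLinearMap) V) ⊗ₜ ((x : Gw))))) := by
  induction V using TensorProduct.induction_on with
  | zero => simp only [map_zero, zero_tmul, LinearMap.zero_apply, neg_zero]
  | tmul q b =>
    simp only [TensorProduct.map_tmul, LinearEquiv.coe_coe, TensorProduct.assoc_tmul,
      LinearMap.coe_comp, Function.comp_apply, TensorProduct.comm_tmul,
      LinearMap.mul'_apply, LinearMap.id_coe, id_eq, Submodule.coe_subtype]
    rw [C.tmulG_spec (m := 1) (n := 1) 1 ((q : Gw)) ((x : Gw)) (C.ι.toLinearMap b)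
      (C.Inv_le 1 x.2) (C.Inv_le 1 q.2)]
    simp
  | add u v hu hv =>
    simp only [map_add, add_tmul, LinearMap.add_apply, hu, hv, neg_add]

lemma M3g (x y : ↥(C.Inv 1)) :
    C.tmulG (C.hatφ ((x : Gw))) (C.hatφ ((y : Gw))) =
      TensorProduct.lift C.tmulG ((map ((map (C.Inv 1).subtype C.ι.toLinearMap) ∘ₗ C.adjInv)
        ((map (C.Inv 1).subtype C.ι.toLinearMap) ∘ₗ C.adjInv)) (x ⊗ₜ y)) +
      (map (C.Inv 1).subtype LinearMap.id) (PhiA C (x ⊗ₜ y)) -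
      (map (C.Inv 1).subtype LinearMap.id) (PhiB C (x ⊗ₜ y)) +
      (1 : Gw) ⊗ₜ ((x : Gw) * (y : Gw)) := by
  rw [hatphi_inv C x, hatphi_inv C y, ← C.adjInv_spec x, ← C.adjInv_spec y]
  rw [_root_.map_map, LinearMap.id_comp, LinearMap.comp_id]
  rw [_root_.map_map, LinearMap.id_comp, LinearMap.comp_id]
  simp only [map_add, LinearMap.add_apply]
  rw [cBg y (C.adjInv x), cCg x (C.adjInv y)]
  have cD : C.tmulG ((1 : Gw) ⊗ₜ ((x : Gw))) ((1 : Gw) ⊗ₜ ((y : Gw))) =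
      (1 : Gw) ⊗ₜ ((x : Gw) * (y : Gw)) := by
    rw [C.tmulG_spec (m := 1) (n := 0) 1 1 ((x : Gw)) ((y : Gw))
      (C.Inv_le 1 x.2) C.S.one_mem]
    simp
  rw [cD]
  have hQa : TensorProduct.lift C.tmulG ((map ((map (C.Inv 1).subtype C.ι.toLinearMap)
      ∘ₗ C.adjInv) ((map (C.Inv 1).subtype C.ι.toLinearMap) ∘ₗ C.adjInv)) (x ⊗ₜ y)) =
      C.tmulG ((map (C.Inv 1).subtype C.ι.toLinearMap) (C.adjInv x))
        ((map (C.Inv 1).subtype C.ι.toLinearMap) (C.adjInv y)) := by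
    simp [TensorProduct.lift.tmul]
  rw [hQa]
  have hPA : PhiA C (x ⊗ₜ y) = (map LinearMap.id (LinearMap.mul' ℂ Gw))
      ((TensorProduct.assoc ℂ ↥(C.Inv 1) Gw Gw).toLinearMap
        (((map LinearMap.id C.ι.toLinearMap) (C.adjInv x)) ⊗ₜ ((y : Gw)))) := rfl
  have hPB : PhiB C (x ⊗ₜ y) = (map LinearMap.id
      ((LinearMap.mul' ℂ Gw) ∘ₗ (TensorProduct.comm ℂ Gw Gw).toLinearMap))
      ((TensorProduct.assoc ℂ ↥(C.Inv 1) Gw Gw).toLinearMap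
        (((map LinearMap.id C.ι.toLinearMap) (C.adjInv y)) ⊗ₜ ((x : Gw)))) := rfl
  rw [hPA, hPB]
  abel

lemma M4g (δ : ↥(C.Inv 1) →ₗ[ℂ] ↥(C.Inv 1) ⊗[ℂ] ↥(C.Inv 1))
    (hδ1 : ∀ θ, adjInv2 C (δ θ) = (map δ LinearMap.id) (C.adjInv θ))
    (hδ2 : ∀ θ : ↥(C.Inv 1), (LinearMap.mul' ℂ Gw)
      ((map (C.Inv 1).subtype (C.Inv 1).subtype) (δ θ)) = C.S.d ((θ : Gw)))
    (θ : ↥(C.Inv 1)) :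
    TensorProduct.lift C.tmulG ((map ((map (C.Inv 1).subtype C.ι.toLinearMap) ∘ₗ C.adjInv)
        ((map (C.Inv 1).subtype C.ι.toLinearMap) ∘ₗ C.adjInv)) (δ θ)) =
      (map (C.S.d ∘ₗ (C.Inv 1).subtype) C.ι.toLinearMap) (C.adjInv θ) := by
  have key : TensorProduct.lift C.tmulG ∘ₗ (map ((map (C.Inv 1).subtype C.ι.toLinearMap)
      ∘ₗ C.adjInv) ((map (C.Inv 1).subtype C.ι.toLinearMap) ∘ₗ C.adjInv)) =
      (map ((LinearMap.mul' ℂ Gw) ∘ₗ (map (C.Inv 1).subtype (C.Inv 1).subtype))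
        C.ι.toLinearMap) ∘ₗ adjInv2 C := by
    apply TensorProduct.ext'
    intro x y
    simp only [LinearMap.comp_apply, TensorProduct.map_tmul, TensorProduct.lift.tmul]
    have hA2 : adjInv2 C (x ⊗ₜ y) = (map LinearMap.id (LinearMap.mul' ℂ A))
        ((tensorTensorTensorComm ℂ ↥(C.Inv 1) A ↥(C.Inv 1) A).toLinearMap
          ((C.adjInv x) ⊗ₜ (C.adjInv y))) := rfl
    rw [hA2]
    generalize C.adjInv x = U
    generalize C.adjInv y = V
    induction U using TensorProduct.induction_on with
    | zero => simp only [map_zero, zero_tmul, LinearMap.zero_apply]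
    | tmul p a =>
      induction V using TensorProduct.induction_on with
      | zero => simp only [map_zero, tmul_zero, LinearMap.map_zero]
      | tmul q b =>
        simp only [TensorProduct.map_tmul, LinearEquiv.coe_coe,
          tensorTensorTensorComm_tmul, LinearMap.mul'_apply, LinearMap.coe_comp,
          Function.comp_apply, LinearMap.id_coe, id_eq, Submodule.coe_subtype]
        rw [C.tmulG_spec (m := 0) (n := 1) ((p : Gw)) ((q : Gw)) (C.ι.toLinearMap a)
          (C.ι.toLinearMap b) (by simpa using C.ι_mem a) (C.Inv_le 1 q.2)]
        simp only [pow_zero, Nat.zero_mul, one_smul, AlgHom.toLinearMap_apply, map_mul]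
      | add u v hu hv =>
        simp only [map_add, tmul_add, LinearMap.map_add, hu, hv]
    | add u v hu hv =>
      simp only [map_add, add_tmul, LinearMap.map_add, LinearMap.add_apply, hu, hv]
  have hk := LinearMap.congr_fun key (δ θ)
  simp only [LinearMap.comp_apply] at hk
  rw [hk, hδ1 θ, TensorProduct.map_map, LinearMap.comp_id]
  congr 2
  apply LinearMap.ext
  intro p
  exact hδ2 p

/-- Second computation of `φ̂(dθ)`. -/
lemma w2 (δ : ↥(C.Inv 1) →ₗ[ℂ] ↥(C.Inv 1) ⊗[ℂ] ↥(C.Inv 1))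
    (hδ1 : ∀ θ, adjInv2 C (δ θ) = (map δ LinearMap.id) (C.adjInv θ))
    (hδ2 : ∀ θ : ↥(C.Inv 1), (LinearMap.mul' ℂ Gw)
      ((map (C.Inv 1).subtype (C.Inv 1).subtype) (δ θ)) = C.S.d ((θ : Gw)))
    (θ : ↥(C.Inv 1)) :
    C.hatφ (C.S.d ((θ : Gw))) =
      (map (C.S.d ∘ₗ (C.Inv 1).subtype) C.ι.toLinearMap) (C.adjInv θ) +
      (map (C.Inv 1).subtype LinearMap.id) (PhiA C (δ θ)) -
      (map (C.Inv 1).subtype LinearMap.id) (PhiB C (δ θ)) +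
      (1 : Gw) ⊗ₜ C.S.d ((θ : Gw)) := by
  have claim1 : ∀ D : ↥(C.Inv 1) ⊗[ℂ] ↥(C.Inv 1),
      C.hatφ (LinearMap.mul' ℂ Gw ((map (C.Inv 1).subtype (C.Inv 1).subtype) D)) =
        TensorProduct.lift C.tmulG
          ((map (C.hatφ ∘ₗ (C.Inv 1).subtype) (C.hatφ ∘ₗ (C.Inv 1).subtype)) D) := by
    intro D
    induction D using TensorProduct.induction_on with
    | zero => simp
    | tmul x y =>
      simp only [TensorProduct.map_tmul, LinearMap.mul'_apply, LinearMap.coe_comp,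
        Function.comp_apply, TensorProduct.lift.tmul, Submodule.coe_subtype]
      exact C.hatφ_mul _ _
    | add u v hu hv => simp only [map_add, hu, hv]
  have claim2 : ∀ D : ↥(C.Inv 1) ⊗[ℂ] ↥(C.Inv 1),
      TensorProduct.lift C.tmulG
        ((map (C.hatφ ∘ₗ (C.Inv 1).subtype) (C.hatφ ∘ₗ (C.Inv 1).subtype)) D) =
      TensorProduct.lift C.tmulG ((map ((map (C.Inv 1).subtype C.ι.toLinearMap) ∘ₗ C.adjInv)
        ((map (C.Inv 1).subtype C.ι.toLinearMap) ∘ₗ C.adjInv)) D) +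
      (map (C.Inv 1).subtype LinearMap.id) (PhiA C D) -
      (map (C.Inv 1).subtype LinearMap.id) (PhiB C D) +
      (TensorProduct.mk ℂ Gw Gw 1) ((LinearMap.mul' ℂ Gw)
        ((map (C.Inv 1).subtype (C.Inv 1).subtype) D)) := by
    intro D
    induction D using TensorProduct.induction_on with
    | zero => simp
    | tmul x y =>
      simp only [TensorProduct.map_tmul, LinearMap.coe_comp, Function.comp_apply,
        TensorProduct.lift.tmul, LinearMap.mul'_apply, TensorProduct.mk_apply,
        Submodule.coe_subtype]
      rw [M3g x y]
      simp only [TensorProduct.map_tmul, LinearMap.coe_comp, Function.comp_apply,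
        TensorProduct.lift.tmul]
    | add u v hu hv =>
      simp only [map_add, hu, hv]
      abel
  have e0 : C.S.d ((θ : Gw)) =
      LinearMap.mul' ℂ Gw ((map (C.Inv 1).subtype (C.Inv 1).subtype) (δ θ)) :=
    (hδ2 θ).symm
  calc C.hatφ (C.S.d ((θ : Gw)))
      = C.hatφ (LinearMap.mul' ℂ Gw
          ((map (C.Inv 1).subtype (C.Inv 1).subtype) (δ θ))) := by rw [← e0]
    _ = _ := by
        rw [claim1 (δ θ), claim2 (δ θ), M4g δ hδ1 hδ2 θ, hδ2 θ]
        rfl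

/-- The key cancellation identity. -/
lemma M6 (δ : ↥(C.Inv 1) →ₗ[ℂ] ↥(C.Inv 1) ⊗[ℂ] ↥(C.Inv 1))
    (hδ1 : ∀ θ, adjInv2 C (δ θ) = (map δ LinearMap.id) (C.adjInv θ))
    (hδ2 : ∀ θ : ↥(C.Inv 1), (LinearMap.mul' ℂ Gw)
      ((map (C.Inv 1).subtype (C.Inv 1).subtype) (δ θ)) = C.S.d ((θ : Gw)))
    (θ : ↥(C.Inv 1)) :
    (map LinearMap.id (C.S.d ∘ₗ C.ι.toLinearMap)) (C.adjInv θ) +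
      PhiA C (δ θ) - PhiB C (δ θ) = 0 := by
  have hT : Function.Injective
      (LinearMap.rTensor Gw ((C.Inv 1).subtype : ↥(C.Inv 1) →ₗ[ℂ] Gw)) :=
    Module.Flat.rTensor_preserves_injective_linearMap _ (Submodule.injective_subtype _)
  apply hT
  rw [map_zero]
  have hrT : ∀ z : ↥(C.Inv 1) ⊗[ℂ] Gw,
      (LinearMap.rTensor Gw ((C.Inv 1).subtype : ↥(C.Inv 1) →ₗ[ℂ] Gw)) z =
        (map (C.Inv 1).subtype LinearMap.id) z := fun _ => rfl
  rw [map_sub, map_add, hrT, hrT, hrT]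
  have hmm : (map (C.Inv 1).subtype LinearMap.id)
      ((map LinearMap.id (C.S.d ∘ₗ C.ι.toLinearMap)) (C.adjInv θ)) =
      (map (C.Inv 1).subtype (C.S.d ∘ₗ C.ι.toLinearMap)) (C.adjInv θ) := by
    rw [_root_.map_map, LinearMap.comp_id, LinearMap.id_comp]
  rw [hmm]
  have heq := (w1 θ).symm.trans (w2 δ hδ1 hδ2 θ)
  -- heq : X1 - X2 + E = X1 + TA - TB + E
  have : (map (C.Inv 1).subtype (C.S.d ∘ₗ C.ι.toLinearMap)) (C.adjInv θ) +
      (map (C.Inv 1).subtype LinearMap.id) (PhiA C (δ θ)) -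
      (map (C.Inv 1).subtype LinearMap.id) (PhiB C (δ θ)) =
      ((map (C.S.d ∘ₗ (C.Inv 1).subtype) C.ι.toLinearMap) (C.adjInv θ) +
        (map (C.Inv 1).subtype LinearMap.id) (PhiA C (δ θ)) -
        (map (C.Inv 1).subtype LinearMap.id) (PhiB C (δ θ)) +
        (1 : Gw) ⊗ₜ C.S.d ((θ : Gw))) -
      ((map (C.S.d ∘ₗ (C.Inv 1).subtype) C.ι.toLinearMap) (C.adjInv θ) -
        (map (C.Inv 1).subtype (C.S.d ∘ₗ C.ι.toLinearMap)) (C.adjInv θ) +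
        (1 : Gw) ⊗ₜ C.S.d ((θ : Gw))) := by abel
  rw [this, ← heq]
  abel


/-- Statement 8, main formula. -/
lemma M7 (δ : ↥(C.Inv 1) →ₗ[ℂ] ↥(C.Inv 1) ⊗[ℂ] ↥(C.Inv 1))
    (hδ1 : ∀ θ, adjInv2 C (δ θ) = (map δ LinearMap.id) (C.adjInv θ))
    (hδ2 : ∀ θ : ↥(C.Inv 1), (LinearMap.mul' ℂ Gw)
      ((map (C.Inv 1).subtype (C.Inv 1).subtype) (δ θ)) = C.S.d ((θ : Gw)))
    (ω : ↥(C.Inv 1) →ₗ[ℂ] Ω) (h1 : ∀ p, ω p ∈ O.S.gr 1)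
    (hF : ∀ p, O.Fh (ω p) =
      (map LinearMap.id C.ι.toLinearMap) ((map ω LinearMap.id) (C.adjInv p)) +
        (1 : Ω) ⊗ₜ ((p : ↥(C.Inv 1)) : Gw)) (θ : ↥(C.Inv 1)) :
    O.Fh (Rcurv O δ ω θ) =
      (map LinearMap.id C.ι.toLinearMap)
        ((map (Rcurv O δ ω) LinearMap.id) (C.adjInv θ)) := by
  have hR : Rcurv O δ ω θ = O.S.d (ω θ) - bra C δ ω ω θ := rfl
  rw [hR, map_sub, M2 O ω h1 hF θ, M5 O δ hδ1 hδ2 ω h1 hF θ]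
  rw [_root_.map_map, LinearMap.id_comp, LinearMap.comp_id]
  have hRmap : map (Rcurv O δ ω) C.ι.toLinearMap =
      map (O.S.d ∘ₗ ω) C.ι.toLinearMap - map (bra C δ ω ω) C.ι.toLinearMap := by
    rw [show Rcurv O δ ω = O.S.d ∘ₗ ω - bra C δ ω ω from rfl, map_sub_left]
  rw [hRmap, LinearMap.sub_apply]
  have h6 := M6 δ hδ1 hδ2 θ
  have h6' : (map ω LinearMap.id) ((map LinearMap.id (C.S.d ∘ₗ C.ι.toLinearMap))
      (C.adjInv θ) + PhiA C (δ θ) - PhiB C (δ θ)) = 0 := by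
    rw [h6, map_zero]
  rw [map_sub, map_add] at h6'
  have hmm : (map ω LinearMap.id) ((map LinearMap.id (C.S.d ∘ₗ C.ι.toLinearMap))
      (C.adjInv θ)) = (map ω (C.S.d ∘ₗ C.ι.toLinearMap)) (C.adjInv θ) := by
    rw [_root_.map_map, LinearMap.comp_id, LinearMap.id_comp]
  rw [hmm] at h6'
  have h7 : (map ω (C.S.d ∘ₗ C.ι.toLinearMap)) (C.adjInv θ) +
      (map ω LinearMap.id) (PhiA C (δ θ)) =
      (map ω LinearMap.id) (PhiB C (δ θ)) := sub_eq_zero.mp h6'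
  rw [← h7]
  abel

end MainAux

section Statement

variable {A : Type} [Ring A] [HopfAlgebra ℂ A] [StarRing A]
variable {Gw : Type} [Ring Gw] [Algebra ℂ Gw]
variable {V B : Type} [Ring V] [Algebra ℂ V] [StarRing V] [Ring B] [Algebra ℂ B] [StarRing B]
variable {Ω : Type} [Ring Ω] [Algebra ℂ Ω]
variable {C : GroupCalc A Gw} {P : QPB A V B}

/-- For every connection `ω`, the curvature `R_ω = dω - ⟨ω,ω⟩`
satisfies `F̂ R_ω(θ) = (R_ω ⊗ id) ϖ(θ)`; in particular `R_ω` takes values in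
`hor²(P)` and is a tensorial 2-form. -/
theorem statement8 (O : Calc A Gw V B Ω C P)
    (δ : ↥(C.Inv 1) →ₗ[ℂ] ↥(C.Inv 1) ⊗[ℂ] ↥(C.Inv 1)) (hδ : IsEmbDiff C δ)
    (ω : ↥(C.Inv 1) →ₗ[ℂ] Ω) (hω : O.IsConnection ω) :
    (∀ θ, O.Fh (Rcurv O δ ω θ) =
      (map LinearMap.id C.ι.toLinearMap)
        ((map (Rcurv O δ ω) LinearMap.id) (C.adjInv θ))) ∧
    (∀ θ, Rcurv O δ ω θ ∈ O.horSub ∧ Rcurv O δ ω θ ∈ O.S.gr 2) ∧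
    O.IsTensorial 2 (Rcurv O δ ω) := by
  obtain ⟨hδ1, hδ2, hδ3⟩ := hδ
  obtain ⟨h1, hconj, hF⟩ := hω
  have hFh : ∀ θ, O.Fh (Rcurv O δ ω θ) =
      (map LinearMap.id C.ι.toLinearMap)
        ((map (Rcurv O δ ω) LinearMap.id) (C.adjInv θ)) :=
    fun θ => M7 O δ hδ1 hδ2 ω h1 hF θ
  have hgr2 : ∀ θ, Rcurv O δ ω θ ∈ O.S.gr 2 := by
    intro θ
    have hR : Rcurv O δ ω θ = O.S.d (ω θ) - bra C δ ω ω θ := rfl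
    rw [hR]
    have hd : O.S.d (ω θ) ∈ O.S.gr 2 := O.S.d_mem (h1 θ)
    have hb : bra C δ ω ω θ ∈ O.S.gr 2 := by
      show LinearMap.mul' ℂ Ω ((map ω ω) (δ θ)) ∈ O.S.gr 2
      generalize δ θ = D
      induction D using TensorProduct.induction_on with
      | zero => simp only [map_zero]; exact zero_mem (O.S.gr 2)
      | tmul x y =>
        simp only [TensorProduct.map_tmul, LinearMap.mul'_apply]
        exact O.S.mul_mem (h1 x) (h1 y)
      | add u v hu hv =>
        simp only [map_add]
        exact add_mem hu hv
    exact sub_mem hd hb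
  have hhor : ∀ θ, Rcurv O δ ω θ ∈ O.horSub := by
    intro θ
    show Rcurv O δ ω θ ∈ LinearMap.ker
      (O.Fh - (map LinearMap.id (C.S.proj 0)) ∘ₗ O.Fh)
    have hp0 : C.S.proj 0 ∘ₗ C.ι.toLinearMap = C.ι.toLinearMap := by
      apply LinearMap.ext
      intro a
      exact C.S.proj_of_mem (by simpa using C.ι_mem a)
    rw [LinearMap.mem_ker, LinearMap.sub_apply, LinearMap.comp_apply, sub_eq_zero,
      hFh θ]
    generalize (map (Rcurv O δ ω) LinearMap.id) (C.adjInv θ) = Z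
    rw [_root_.map_map, LinearMap.id_comp, hp0]
  exact ⟨hFh, fun θ => ⟨hhor θ, hgr2 θ⟩, fun θ => ⟨hhor θ, hgr2 θ⟩, hFh⟩

end Statement

end
end

section
/- For every connection ω on P and every tensorial form φ∈τ(P), the covariant derivative satisfies D_ωφ=dφ−(−1)^{∂φ}[φ,ω], where D_ωφ denotes the composition of φ with D_ω. -/
open TensorProduct

noncomputable section

variable (A : Type) [Ring A] [HopfAlgebra ℂ A]

theorem GroupCalc.ιinv_comp_ι {A : Type} [Ring A] [HopfAlgebra ℂ A] [StarRing A]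
    {Gw : Type} [Ring Gw] [Algebra ℂ Gw] (C : GroupCalc A Gw) :
    C.ιinv ∘ₗ C.ι.toLinearMap = LinearMap.id :=
  LinearMap.ext C.ιinv_ι

namespace Calc

variable {A : Type} [Ring A] [HopfAlgebra ℂ A] [StarRing A]
variable {Gw : Type} [Ring Gw] [Algebra ℂ Gw]
variable {V B : Type} [Ring V] [Algebra ℂ V] [StarRing V] [Ring B] [Algebra ℂ B] [StarRing B]
variable {Ω : Type} [Ring Ω] [Algebra ℂ Ω]
variable {C : GroupCalc A Gw} {P : QPB A V B} {O : Calc A Gw V B Ω C P}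

theorem IsTensorial.Fa_comp {k : ℕ} {f : ↥(C.Inv 1) →ₗ[ℂ] Ω} (hf : O.IsTensorial k f) :
    O.Fa ∘ₗ f = map f LinearMap.id ∘ₗ C.adjInv := by
  ext θ
  rw [LinearMap.comp_apply, Fa, LinearMap.comp_apply, hf.2 θ, ← LinearMap.comp_apply,
    ← map_comp, LinearMap.id_comp, C.ιinv_comp_ι, map_id, LinearMap.id_apply,
    LinearMap.comp_apply]

/-- The intertwining `F^∧ ∘ φ = (φ ⊗ id) ∘ ϖ` turns the correction term of `D_ω ∘ φ` into
`m_Ω (φ ⊗ ωπ) ϖ = m_Ω (φ ⊗ ω) c^⊤ = [φ, ω]`. -/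
theorem Dcov_comp_of_Fa_comp (ω : ↥(C.Inv 1) →ₗ[ℂ] Ω) (k : ℕ) {f : ↥(C.Inv 1) →ₗ[ℂ] Ω}
    (hf : O.Fa ∘ₗ f = map f LinearMap.id ∘ₗ C.adjInv) :
    O.Dcov ω k ∘ₗ f = O.S.d ∘ₗ f - ((-1 : ℂ) ^ k) • com C f ω := by
  have hmap : map LinearMap.id (ω ∘ₗ C.πInv) ∘ₗ map f LinearMap.id =
      map f ω ∘ₗ map LinearMap.id C.πInv := by
    rw [← map_comp, ← map_comp]
    simp only [LinearMap.id_comp, LinearMap.comp_id]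
  rw [Dcov, LinearMap.sub_comp, LinearMap.smul_comp, LinearMap.comp_assoc,
    LinearMap.comp_assoc, hf, ← LinearMap.comp_assoc C.adjInv (map f LinearMap.id), hmap,
    com, cT, LinearMap.comp_assoc]

end Calc

section Statement

variable {A : Type} [Ring A] [HopfAlgebra ℂ A] [StarRing A]
variable {Gw : Type} [Ring Gw] [Algebra ℂ Gw]
variable {V B : Type} [Ring V] [Algebra ℂ V] [StarRing V] [Ring B] [Algebra ℂ B] [StarRing B]
variable {Ω : Type} [Ring Ω] [Algebra ℂ Ω]
variable {C : GroupCalc A Gw} {P : QPB A V B}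

theorem statement11_general (O : Calc A Gw V B Ω C P)
    (ω : ↥(C.Inv 1) →ₗ[ℂ] Ω)
    (k : ℕ) (f : ↥(C.Inv 1) →ₗ[ℂ] Ω) (hf : O.IsTensorial k f) :
    (O.Dcov ω k) ∘ₗ f = O.S.d ∘ₗ f - ((-1 : ℂ) ^ k) • (com C f ω) :=
  Calc.Dcov_comp_of_Fa_comp ω k hf.Fa_comp

/-- For every connection `ω` and tensorial form `φ ∈ τ(P)`,
`D_ω φ = dφ - (-1)^{∂φ} [φ, ω]`. -/
theorem statement11 (O : Calc A Gw V B Ω C P)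
    (ω : ↥(C.Inv 1) →ₗ[ℂ] Ω) (hω : O.IsConnection ω)
    (k : ℕ) (f : ↥(C.Inv 1) →ₗ[ℂ] Ω) (hf : O.IsTensorial k f) :
    (O.Dcov ω k) ∘ₗ f = O.S.d ∘ₗ f - ((-1 : ℂ) ^ k) • (com C f ω) :=
  statement11_general O ω k f hf

end Statement

end
end
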